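/- The Fourier transform ∫ φ(s; 0, γ, σ) e^{iτs} ds of the skewed Laplace density centered at μ = 0 equals (C(τ) + iγτ)/(C(τ)² + γ²τ²), where C(τ) = 1 + σ²τ²/2. -/

import Mathlib

/-!
Split the integral at `0`: on each half-line the integrand is `A * exp (c * s)` with `Re c` of
the sign that makes it integrable, so the transform is `A * ((λ₋ + iτ)⁻¹ + (λ₊ - iτ)⁻¹)` with
rates `λ₋ = √2 / (σκ)` and `λ₊ = √2κ / σ`. The choice of `κ` is exactly what makes
`κ⁻¹ - κ = √2γ/σ`, i.e. `(λ₋ - λ₊)σ² = 2γ`; together with `λ₊λ₋σ² = 2` and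
`A(λ₊ + λ₋)σ² = 2` this collapses the sum to `(C - iγτ)⁻¹`.
-/

open MeasureTheory Complex Set

theorem integral_ite_neg_cexp_mul {c₁ c₂ : ℂ} (h₁ : 0 < c₁.re) (h₂ : c₂.re < 0) :
    ∫ s : ℝ, (if s < 0 then cexp (c₁ * s) else cexp (c₂ * s)) = c₁⁻¹ - c₂⁻¹ := by
  set f := fun s : ℝ ↦ if s < 0 then cexp (c₁ * s) else cexp (c₂ * s)
  have h_left : EqOn f (fun s ↦ cexp (c₁ * s)) (Iio 0) := fun s hs ↦ if_pos hs
  have h_right : EqOn f (fun s ↦ cexp (c₂ * s)) (Ici 0) := fun s hs ↦ if_neg (not_lt.mpr hs)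
  have hf_left : IntegrableOn f (Iio 0) :=
    ((integrableOn_exp_mul_complex_Iic h₁ 0).mono_set Iio_subset_Iic_self).congr_fun
      h_left.symm measurableSet_Iio
  have hf_right : IntegrableOn f (Ici 0) :=
    (Iff.mpr integrableOn_Ici_iff_integrableOn_Ioi
      (integrableOn_exp_mul_complex_Ioi h₂ 0)).congr_fun h_right.symm measurableSet_Ici
  rw [← intervalIntegral.integral_Iio_add_Ici hf_left hf_right,
    setIntegral_congr_fun measurableSet_Iio h_left, setIntegral_congr_fun measurableSet_Ici h_right,
    ← integral_Iic_eq_integral_Iio, integral_Ici_eq_integral_Ioi,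
    integral_exp_mul_complex_Iic h₁, integral_exp_mul_complex_Ioi h₂]
  simp [sub_eq_add_neg, neg_div]

theorem inv_ofReal_sub_I_mul {x y : ℝ} (hx : x ≠ 0) :
    ((x : ℂ) - I * y)⁻¹ = (x + I * y) / (x ^ 2 + y ^ 2) := by
  have hne : (x : ℂ) - I * y ≠ 0 := fun h ↦ hx (by simpa using congrArg re h)
  have hnorm : ((x : ℂ) - I * y) * (x + I * y) = x ^ 2 + y ^ 2 := by
    linear_combination (-(y : ℂ) ^ 2) * I_sq
  have hden : (x : ℂ) ^ 2 + y ^ 2 ≠ 0 := by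
    rw [← hnorm]; exact mul_ne_zero hne fun h ↦ hx (by simpa using congrArg re h)
  rw [eq_div_iff hden, ← hnorm, inv_mul_cancel_left₀ hne]

namespace SkewedLaplace

theorem mul_inv_sub_inv_eq_inv {A a b σ γ τ : ℂ} (hb : b + I * τ ≠ 0) (ha : -a + I * τ ≠ 0)
    (hσ : σ ≠ 0) (hab : a * b * σ ^ 2 = 2) (hba : (b - a) * σ ^ 2 = 2 * γ)
    (hA : A * (a + b) * σ ^ 2 = 2) :
    A * ((b + I * τ)⁻¹ - (-a + I * τ)⁻¹) = (1 + σ ^ 2 * τ ^ 2 / 2 - I * γ * τ)⁻¹ := by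
  have hprod : (b + I * τ) * (-a + I * τ) * σ ^ 2 = -2 * (1 + σ ^ 2 * τ ^ 2 / 2 - I * γ * τ) := by
    linear_combination -hab + I * τ * hba + τ ^ 2 * σ ^ 2 * I_sq
  calc A * ((b + I * τ)⁻¹ - (-a + I * τ)⁻¹)
      = -(A * (a + b) * σ ^ 2) / ((b + I * τ) * (-a + I * τ) * σ ^ 2) := by field_simp; ring
    _ = (1 + σ ^ 2 * τ ^ 2 / 2 - I * γ * τ)⁻¹ := by
      rw [hA, hprod, neg_mul, neg_div_neg_eq, div_mul_cancel_left₀ two_ne_zero]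

theorem rate_mul_rate {σ κ : ℝ} (hσ : σ ≠ 0) (hκ : κ ≠ 0) :
    Real.sqrt 2 * κ / σ * (Real.sqrt 2 / (σ * κ)) * σ ^ 2 = 2 := by
  field_simp
  exact Real.sq_sqrt zero_le_two

theorem normalizer_mul_rate_add_rate {σ κ : ℝ} (hσ : σ ≠ 0) (hκ : κ ≠ 0) :
    Real.sqrt 2 / σ * (κ / (1 + κ ^ 2)) * (Real.sqrt 2 * κ / σ + Real.sqrt 2 / (σ * κ)) * σ ^ 2
      = 2 := by
  have : 1 + κ ^ 2 ≠ 0 := by positivity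
  field_simp
  linear_combination (1 + κ ^ 2) * Real.sq_sqrt zero_le_two

section Kappa

variable {γ σ κ : ℝ} (hσ : 0 < σ)
  (hκ : κ = Real.sqrt 2 * σ / (γ + Real.sqrt (2 * σ ^ 2 + γ ^ 2)))
include hσ hκ

theorem kappa_pos : 0 < κ := by
  have : |γ| < Real.sqrt (2 * σ ^ 2 + γ ^ 2) := by
    rw [← Real.sqrt_sq_eq_abs]
    exact Real.sqrt_lt_sqrt (sq_nonneg γ) (by nlinarith)
  have : 0 < γ + Real.sqrt (2 * σ ^ 2 + γ ^ 2) := by linarith [neg_abs_le γ]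
  rw [hκ]; positivity

theorem kappa_inv_sub_self : κ⁻¹ - κ = Real.sqrt 2 * γ / σ := by
  have hκpos := kappa_pos hσ hκ
  set R := Real.sqrt (2 * σ ^ 2 + γ ^ 2)
  have hR : R ^ 2 = 2 * σ ^ 2 + γ ^ 2 := Real.sq_sqrt (by positivity)
  have hγR : γ + R ≠ 0 := by
    rintro h; rw [hκ, h, div_zero] at hκpos; exact lt_irrefl _ hκpos
  rw [hκ]
  field_simp
  linear_combination hR - (σ ^ 2 + γ * R + γ ^ 2) * Real.sq_sqrt zero_le_two

theorem rate_sub_rate : (Real.sqrt 2 / (σ * κ) - Real.sqrt 2 * κ / σ) * σ ^ 2 = 2 * γ := by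
  have hκ0 := (kappa_pos hσ hκ).ne'
  calc (Real.sqrt 2 / (σ * κ) - Real.sqrt 2 * κ / σ) * σ ^ 2
      = Real.sqrt 2 * σ * (κ⁻¹ - κ) := by field_simp
    _ = 2 * γ := by
      rw [kappa_inv_sub_self hσ hκ]
      field_simp
      linear_combination γ * Real.sq_sqrt zero_le_two

end Kappa

end SkewedLaplace

/-- The Fourier transform (with kernel e^{iτs}) of the skewed Laplace density
centered at 0 equals (C(τ) + iγτ)/(C(τ)² + γ²τ²) with C(τ) = 1 + σ²τ²/2. -/
theorem skewedLaplace_fourier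
    (γ σ : ℝ) (hσ : 0 < σ)
    (κ : ℝ) (hκ : κ = Real.sqrt 2 * σ / (γ + Real.sqrt (2 * σ ^ 2 + γ ^ 2)))
    (φ : ℝ → ℝ)
    (hφ : ∀ s, φ s =
      if s < 0 then
        (Real.sqrt 2 / σ) * (κ / (1 + κ ^ 2)) * Real.exp ((Real.sqrt 2 / (σ * κ)) * s)
      else
        (Real.sqrt 2 / σ) * (κ / (1 + κ ^ 2)) * Real.exp (-(Real.sqrt 2 * κ / σ) * s))
    (τ : ℝ) (C : ℝ) (hC : C = 1 + σ ^ 2 * τ ^ 2 / 2) :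
    ∫ s : ℝ, (φ s : ℂ) * Complex.exp (Complex.I * τ * s) =
      ((C : ℂ) + Complex.I * γ * τ) / ((C : ℂ) ^ 2 + (γ : ℂ) ^ 2 * (τ : ℂ) ^ 2) := by
  have hκpos := SkewedLaplace.kappa_pos hσ hκ
  set A := Real.sqrt 2 / σ * (κ / (1 + κ ^ 2))
  set b := Real.sqrt 2 / (σ * κ)
  set a := Real.sqrt 2 * κ / σ
  have hb : 0 < b := by positivity
  have ha : 0 < a := by positivity
  have h_integrand : ∀ s : ℝ, (φ s : ℂ) * cexp (I * τ * s) =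
      A * (if s < 0 then cexp ((b + I * τ) * s) else cexp ((-a + I * τ) * s)) := by
    intro s
    rw [hφ s]
    split_ifs <;> push_cast <;> rw [mul_assoc, ← Complex.exp_add] <;> ring_nf
  have hb' : 0 < ((b : ℂ) + I * τ).re := by simpa using hb
  have ha' : ((-a : ℂ) + I * τ).re < 0 := by simpa using ha
  simp_rw [h_integrand]
  rw [integral_const_mul, integral_ite_neg_cexp_mul hb' ha',
    SkewedLaplace.mul_inv_sub_inv_eq_inv (σ := σ) (γ := γ) (ne_zero_of_re_pos hb')
      (fun h ↦ by simp [h] at ha') (by exact_mod_cast hσ.ne')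
      (by exact_mod_cast SkewedLaplace.rate_mul_rate hσ.ne' hκpos.ne')
      (by exact_mod_cast SkewedLaplace.rate_sub_rate hσ hκ)
      (by exact_mod_cast SkewedLaplace.normalizer_mul_rate_add_rate hσ.ne' hκpos.ne')]
  have hC0 : C ≠ 0 := by rw [hC]; positivity
  convert inv_ofReal_sub_I_mul (y := γ * τ) hC0 using 1 <;> push_cast [hC] <;> ring
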